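/- Let (C, ◇, Tr) be a guarded traced category. For every f : ◇X × A → X × B set h = Tr^X_{A,X}(Δ_X ∘ π_ℓ ∘ f) : A → X. Then Tr^X_{A,B}(f) = π_r ∘ f ∘ (p_X × id_A) ∘ ⟨h, id_A⟩. -/

import Mathlib

/-!
Split the feedback wire of `f` in two: by (V2) and sliding along the diagonal, `Tr f` is the
double trace of `g (d₁, d₂, a) = (x, x, π_r f (d₂, a))` with `x = π_ℓ f (d₁, a)`. The third
output of `g` ignores `d₁`, so superposing computes the inner trace as
`(d₂, a) ↦ (h a, π_r f (d₂, a))`. Its feedback output ignores `d₂`, and superposing together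
with yanking shows that such a trace just feeds `p ∘ h` back into the delayed input.
-/

open CategoryTheory CategoryTheory.Limits

universe v u

/-- A guarded trace operator: a family `Tr : Hom(◇X × A, X × B) → Hom(A, B)` satisfying
left/right tightening, sliding (together: naturality), vanishing (V1), (V2),
superposing (S) and yanking (Y). -/
structure IsGuardedTrace {C : Type u} [Category.{v} C] [HasFiniteProducts C]
    (D : C ⥤ C) (p : 𝟭 C ⟶ D)
    (Tr : ∀ {X A B : C}, (D.obj X ⨯ A ⟶ X ⨯ B) → (A ⟶ B)) : Prop where
  left_tightening : ∀ {X A A' B : C} (f : D.obj X ⨯ A ⟶ X ⨯ B) (g : A' ⟶ A),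
      Tr (prod.map (𝟙 (D.obj X)) g ≫ f) = g ≫ Tr f
  right_tightening : ∀ {X A B B' : C} (f : D.obj X ⨯ A ⟶ X ⨯ B) (g : B ⟶ B'),
      Tr (f ≫ prod.map (𝟙 X) g) = Tr f ≫ g
  sliding : ∀ {X X' A B : C} (f : D.obj X ⨯ A ⟶ X' ⨯ B) (g : X' ⟶ X),
      Tr (f ≫ prod.map g (𝟙 B)) = Tr (prod.map (D.map g) (𝟙 A) ≫ f)
  vanishing₁ : ∀ {A B : C} (f : D.obj (⊤_ C) ⨯ A ⟶ (⊤_ C) ⨯ B),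
      Tr f = prod.lift (terminal.from A ≫ p.app (⊤_ C)) (𝟙 A) ≫ f ≫ prod.snd
  vanishing₂ : ∀ {X Y A B : C} (f : D.obj X ⨯ (D.obj Y ⨯ A) ⟶ X ⨯ (Y ⨯ B)),
      Tr (Tr f) =
      Tr (prod.lift (prod.fst ≫ D.map prod.fst)
            (prod.lift (prod.fst ≫ D.map prod.snd) prod.snd) ≫ f ≫
          prod.lift (prod.lift prod.fst (prod.snd ≫ prod.fst)) (prod.snd ≫ prod.snd))
  superposing : ∀ {X A B E : C} (f : D.obj X ⨯ A ⟶ X ⨯ B),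
      Tr (prod.lift
            (prod.lift prod.fst (prod.snd ≫ prod.fst) ≫ f ≫ prod.fst)
            (prod.lift (prod.lift prod.fst (prod.snd ≫ prod.fst) ≫ f ≫ prod.snd)
              ((prod.snd : D.obj X ⨯ (A ⨯ E) ⟶ A ⨯ E) ≫ prod.snd))) =
        prod.map (Tr f) (𝟙 E)
  yanking : ∀ X : C,
      Tr (prod.lift prod.snd prod.fst : D.obj X ⨯ X ⟶ X ⨯ D.obj X) = p.app X

attribute [local simp] prod.lift_fst prod.lift_snd prod.lift_fst_assoc prod.lift_snd_assoc

namespace IsGuardedTrace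

variable {C : Type u} [Category.{v} C] [HasFiniteProducts C] {D : C ⥤ C} {p : 𝟭 C ⟶ D}
  {Tr : ∀ {X A B : C}, (D.obj X ⨯ A ⟶ X ⨯ B) → (A ⟶ B)}

theorem trace_lift_lift_snd_comp (hTr : IsGuardedTrace D p @Tr) {X A B E : C}
    (f₁ : D.obj X ⨯ A ⟶ X) (f₂ : D.obj X ⨯ A ⟶ B) (e : A ⟶ E) :
    Tr (prod.lift f₁ (prod.lift f₂ (prod.snd ≫ e))) = prod.lift (Tr (prod.lift f₁ f₂)) e := by
  have h := congrArg (prod.lift (𝟙 A) e ≫ ·) (hTr.superposing (E := E) (prod.lift f₁ f₂))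
  simp only [← hTr.left_tightening] at h
  convert h using 2 <;> ext <;> simp [prod.comp_lift_assoc]

theorem trace_lift_snd_comp_fst_fst (hTr : IsGuardedTrace D p @Tr) {X A : C} :
    Tr (prod.lift (prod.snd ≫ prod.fst) prod.fst : D.obj X ⨯ (X ⨯ A) ⟶ X ⨯ D.obj X) =
      prod.fst ≫ p.app X := by
  rw [← hTr.yanking, ← hTr.left_tightening]
  congr 1
  ext <;> simp

theorem trace_lift_snd_comp (hTr : IsGuardedTrace D p @Tr) {X A B : C}
    (t : A ⟶ X) (s : D.obj X ⨯ A ⟶ B) :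
    Tr (prod.lift (prod.snd ≫ t) s) = prod.lift t (𝟙 A) ≫ prod.map (p.app X) (𝟙 A) ≫ s := by
  have hswap : Tr (prod.lift (prod.snd ≫ prod.fst) (prod.lift prod.fst (prod.snd ≫ prod.snd)) :
      D.obj X ⨯ (X ⨯ A) ⟶ X ⨯ (D.obj X ⨯ A)) = prod.map (p.app X) (𝟙 A) := by
    rw [trace_lift_lift_snd_comp hTr, trace_lift_snd_comp_fst_fst hTr]
    ext <;> simp
  rw [← hswap, ← hTr.right_tightening, ← hTr.left_tightening]
  congr 1
  ext <;> simp [prod.comp_lift_assoc]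

theorem trace_trace_copy (hTr : IsGuardedTrace D p @Tr) {X A B : C}
    (f : D.obj X ⨯ A ⟶ X ⨯ B) :
    Tr (Tr (prod.lift (prod.map (𝟙 _) prod.snd ≫ f ≫ prod.fst)
      (prod.lift (prod.map (𝟙 _) prod.snd ≫ f ≫ prod.fst) (prod.snd ≫ f ≫ prod.snd)))) =
      Tr f := by
  rw [hTr.vanishing₂]
  have hcopy : prod.lift (prod.fst ≫ D.map prod.fst)
        (prod.lift (prod.fst ≫ D.map prod.snd) prod.snd) ≫
      prod.lift (prod.map (𝟙 _) prod.snd ≫ f ≫ prod.fst)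
        (prod.lift (prod.map (𝟙 _) prod.snd ≫ f ≫ prod.fst) (prod.snd ≫ f ≫ prod.snd)) ≫
      prod.lift (prod.lift prod.fst (prod.snd ≫ prod.fst)) (prod.snd ≫ prod.snd) =
      prod.lift (prod.lift (prod.fst ≫ D.map prod.fst) prod.snd ≫ f ≫ prod.fst)
        (prod.lift (prod.fst ≫ D.map prod.snd) prod.snd ≫ f ≫ prod.snd) ≫
        prod.map (prod.lift (𝟙 X) (𝟙 X)) (𝟙 B) := by
    ext <;> simp
  rw [hcopy, hTr.sliding]
  congr 1
  ext <;> simp [prod.comp_lift_assoc, ← D.map_comp]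

end IsGuardedTrace

/-- **Fixpoint identity for guarded traces.**  In a guarded traced category, for every
`f : ◇X × A ⟶ X × B`, setting `h = Tr (Δ_X ∘ π_ℓ ∘ f) : A ⟶ X` one has
`Tr f = π_r ∘ f ∘ (p_X × id_A) ∘ ⟨h, id_A⟩`. -/
theorem guardedTrace_fixpoint
    {C : Type u} [Category.{v} C] [HasFiniteProducts C]
    (D : C ⥤ C) (p : 𝟭 C ⟶ D)
    (Tr : ∀ {X A B : C}, (D.obj X ⨯ A ⟶ X ⨯ B) → (A ⟶ B))
    (hTr : IsGuardedTrace D p @Tr) :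
    ∀ {X A B : C} (f : D.obj X ⨯ A ⟶ X ⨯ B),
      Tr f =
        prod.lift (Tr (f ≫ prod.fst ≫ prod.lift (𝟙 X) (𝟙 X))) (𝟙 A) ≫
          prod.map (p.app X) (𝟙 A) ≫ f ≫ prod.snd := by
  intro X A B f
  have hinner : Tr (prod.lift (prod.map (𝟙 _) prod.snd ≫ f ≫ prod.fst)
      (prod.lift (prod.map (𝟙 _) prod.snd ≫ f ≫ prod.fst) (prod.snd ≫ f ≫ prod.snd))) =
      prod.lift (prod.snd ≫ Tr (f ≫ prod.fst ≫ prod.lift (𝟙 X) (𝟙 X))) (f ≫ prod.snd) := by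
    rw [hTr.trace_lift_lift_snd_comp, ← prod.comp_lift, hTr.left_tightening]
    simp [prod.comp_lift]
  rw [← hTr.trace_trace_copy f, hinner, hTr.trace_lift_snd_comp]
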